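/- The mean distance of the subKautz digraph sK(d,2) with d ≥ 3 equals (2d² + 3d − 1)/(d² + d), where the mean distance is the average of dist(u,v) over all ordered pairs (u,v) of vertices divided appropriately (here, by vertex-transitivity, the average of dist(u,v) over all v for a fixed u). -/

import Mathlib

/-- Vertex of `sK(d,2)`: an ordered pair `x₁x₂` with `x₁ ≠ x₂`. -/
abbrev sk2Vert {n : ℕ} (x : Fin 2 → Fin n) : Prop := x 0 ≠ x 1

/-- Arc of `sK(d,2)`: `x₁x₂ → x₂x₃` with `x₃ ∉ {x₁, x₂}`. -/
abbrev sk2Adj {n : ℕ} (x y : Fin 2 → Fin n) : Prop :=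
  y 0 = x 1 ∧ y 1 ≠ x 0 ∧ y 1 ≠ x 1

/-- A walk of length `k` in `sK(d,2)` from `u` to `v`. -/
abbrev sk2Walk {n : ℕ} (k : ℕ) (u v : Fin 2 → Fin n) : Prop :=
  ∃ w : Fin (k + 1) → Fin 2 → Fin n, w 0 = u ∧ w (Fin.last k) = v ∧
    (∀ i, sk2Vert (w i)) ∧ ∀ i j : Fin (k + 1), j.val = i.val + 1 → sk2Adj (w i) (w j)

/-- `v` is at distance exactly `m` from `u` in `sK(d,2)`. -/
abbrev sk2DistEq {n : ℕ} (u v : Fin 2 → Fin n) (m : ℕ) : Prop :=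
  sk2Walk m u v ∧ ∀ k < m, ¬ sk2Walk k u v

/-! A vertex `xy` is at distance 0 from `ab` if `xy = ab`, 1 if `x = b, y ≠ a`, 2 if
`x ∉ {a, b}, y ≠ b`, 3 if `x = a, y ≠ b` or `x ∉ {a, b}, y = b`, and 4 if `xy = ba`.
Walks of length at most 2 are determined by their endpoints, a walk of length 3 never ends
at a vertex `bx`, and with at least four symbols the walks of length 3 and 4 can be routed
through fresh symbols. Summing this table row by row gives `2d² + 3d − 1`. -/

lemma sk2Walk_zero_iff {n : ℕ} {u v : Fin 2 → Fin n} :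
    sk2Walk 0 u v ↔ u = v ∧ sk2Vert u := by
  constructor
  · rintro ⟨w, rfl, rfl, hw, -⟩
    exact ⟨rfl, hw 0⟩
  · rintro ⟨rfl, hu⟩
    exact ⟨fun _ => u, rfl, rfl, fun _ => hu, fun i j hij => by omega⟩

lemma sk2Walk_succ_iff {n k : ℕ} {u v : Fin 2 → Fin n} :
    sk2Walk (k + 1) u v ↔ sk2Vert u ∧ ∃ m, sk2Adj u m ∧ sk2Walk k m v := by
  constructor
  · rintro ⟨w, rfl, rfl, hw, hadj⟩
    exact ⟨hw 0, w 1, hadj 0 1 rfl, Fin.tail w, rfl, rfl, fun i => hw _,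
      fun i j hij => hadj _ _ (by simp [hij])⟩
  · rintro ⟨hu, m, hum, w, rfl, rfl, hw, hadj⟩
    refine ⟨Fin.cons u w, rfl, rfl, Fin.cases hu hw, fun i j hij => ?_⟩
    cases j using Fin.cases with
    | zero => simp at hij
    | succ j =>
      cases i using Fin.cases with
      | zero =>
        obtain rfl : j = 0 := by ext; simpa using hij
        exact hum
      | succ i => exact hadj i j (by simpa using hij)

section
variable {n : ℕ} {u v : Fin 2 → Fin n}

lemma sk2Walk_one_iff : sk2Walk 1 u v ↔ sk2Vert u ∧ sk2Adj u v := by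
  rw [sk2Walk_succ_iff]
  constructor
  · rintro ⟨hu, m, hm, hmv⟩
    obtain ⟨rfl, -⟩ := sk2Walk_zero_iff.1 hmv
    exact ⟨hu, hm⟩
  · rintro ⟨hu, huv⟩
    exact ⟨hu, v, huv, sk2Walk_zero_iff.2 ⟨rfl, fun h => huv.2.2 (h.symm.trans huv.1)⟩⟩

lemma sk2Walk_two_iff :
    sk2Walk 2 u v ↔ sk2Vert u ∧ sk2Vert v ∧ v 0 ≠ u 0 ∧ v 0 ≠ u 1 ∧ v 1 ≠ u 1 := by
  rw [sk2Walk_succ_iff]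
  constructor
  · rintro ⟨hu, m, ⟨hm0, hm1, hm1'⟩, hmv⟩
    obtain ⟨-, hv0, hv1, hv1'⟩ := sk2Walk_one_iff.1 hmv
    refine ⟨hu, fun h => hv1' (h.symm.trans hv0), hv0 ▸ hm1, hv0 ▸ hm1', hm0 ▸ hv1⟩
  · rintro ⟨hu, hv, hvu0, hvu1, hvu1'⟩
    exact ⟨hu, ![u 1, v 0], ⟨rfl, hvu0, hvu1⟩,
      sk2Walk_one_iff.2 ⟨Ne.symm hvu1, rfl, hvu1', hv.symm⟩⟩

lemma sk2Walk_three_ne (h : sk2Walk 3 u v) : v 0 ≠ u 1 := by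
  obtain ⟨-, m, ⟨hm0, -⟩, hmv⟩ := sk2Walk_succ_iff.1 h
  exact hm0 ▸ (sk2Walk_two_iff.1 hmv).2.2.1

lemma sk2Walk_three_of_ne (hu : sk2Vert u) (hv : sk2Vert v) (hvu : v 0 ≠ u 1) {c : Fin n}
    (hcu0 : c ≠ u 0) (hcu1 : c ≠ u 1) (hcv0 : c ≠ v 0) (hcv1 : c ≠ v 1) : sk2Walk 3 u v :=
  sk2Walk_succ_iff.2 ⟨hu, ![u 1, c], ⟨rfl, hcu0, hcu1⟩,
    sk2Walk_two_iff.2 ⟨hcu1.symm, hv, hvu, hcv0.symm, hcv1.symm⟩⟩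

end

lemma exists_ne_ne_ne {α : Type*} [Fintype α] (h : 3 < Fintype.card α) (a b c : α) :
    ∃ x, x ≠ a ∧ x ≠ b ∧ x ≠ c := by
  classical
  obtain ⟨x, -, hx⟩ := Finset.exists_mem_notMem_of_card_lt_card
    ((Finset.card_le_three (a := a) (b := b) (c := c)).trans_lt h)
  simp only [Finset.mem_insert, Finset.mem_singleton, not_or] at hx
  exact ⟨x, hx⟩

def sk2Dist {n : ℕ} (u v : Fin 2 → Fin n) : ℕ :=
  if v 0 = u 1 then (if v 1 = u 0 then 4 else 1)
  else if v 0 = u 0 then (if v 1 = u 1 then 0 else 3)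
  else if v 1 = u 1 then 3 else 2

section
variable {n : ℕ} {u v : Fin 2 → Fin n}

lemma sk2Dist_le_of_sk2Walk {k : ℕ} (h : sk2Walk k u v) : sk2Dist u v ≤ k := by
  obtain _ | _ | _ | _ | k := k
  · obtain ⟨rfl, hu⟩ := sk2Walk_zero_iff.1 h
    simp [sk2Dist, show u 0 ≠ u 1 from hu]
  · obtain ⟨-, hv0, hv1, -⟩ := sk2Walk_one_iff.1 h
    simp [sk2Dist, hv0, hv1]
  · obtain ⟨-, -, hv0, hv0', hv1⟩ := sk2Walk_two_iff.1 h
    simp [sk2Dist, hv0, hv0', hv1]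
  · have hv0 := sk2Walk_three_ne h
    unfold sk2Dist
    split_ifs <;> simp_all
  · unfold sk2Dist
    split_ifs <;> omega

lemma sk2Walk_sk2Dist {d : ℕ} {u v : Fin 2 → Fin (d + 1)} (hd : 3 ≤ d) (hu : sk2Vert u)
    (hv : sk2Vert v) : sk2Walk (sk2Dist u v) u v := by
  have hcard : 3 < Fintype.card (Fin (d + 1)) := by simp; omega
  unfold sk2Dist
  split_ifs with hvu0 hvu1 hvu0' hvu1' hvu1''
  · obtain ⟨c, hcu0, hcu1, -⟩ := exists_ne_ne_ne hcard (u 0) (u 1) (u 1)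
    obtain ⟨e, heu0, heu1, hec⟩ := exists_ne_ne_ne hcard (u 0) (u 1) c
    exact sk2Walk_succ_iff.2 ⟨hu, ![u 1, c], ⟨rfl, hcu0, hcu1⟩,
      sk2Walk_three_of_ne hcu1.symm hv (fun h => hcu1 (h.symm.trans hvu0)) heu1 hec
        (hvu0 ▸ heu1) (hvu1 ▸ heu0)⟩
  · exact sk2Walk_one_iff.2 ⟨hu, hvu0, hvu1, hvu0 ▸ hv.symm⟩
  · obtain rfl : v = u := by ext i; fin_cases i <;> simp [hvu0', hvu1']
    exact sk2Walk_zero_iff.2 ⟨rfl, hu⟩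
  · obtain ⟨c, hcu0, hcu1, hcv1⟩ := exists_ne_ne_ne hcard (u 0) (u 1) (v 1)
    exact sk2Walk_three_of_ne hu hv hvu0 hcu0 hcu1 (hvu0' ▸ hcu0) hcv1
  · obtain ⟨c, hcu0, hcu1, hcv0⟩ := exists_ne_ne_ne hcard (u 0) (u 1) (v 0)
    exact sk2Walk_three_of_ne hu hv hvu0 hcu0 hcu1 hcv0 (hvu1'' ▸ hcu1)
  · exact sk2Walk_two_iff.2 ⟨hu, hv, hvu0', hvu0, hvu1''⟩

lemma sk2DistEq_sk2Dist {d : ℕ} {u v : Fin 2 → Fin (d + 1)} (hd : 3 ≤ d) (hu : sk2Vert u)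
    (hv : sk2Vert v) : sk2DistEq u v (sk2Dist u v) :=
  ⟨sk2Walk_sk2Dist hd hu hv, fun _ hk hw => (sk2Dist_le_of_sk2Walk hw).not_gt hk⟩

end

lemma sk2DistEq.sInf_eq {n m : ℕ} {u v : Fin 2 → Fin n} (h : sk2DistEq u v m) :
    sInf {k | sk2Walk k u v} = m :=
  le_antisymm (Nat.sInf_le h.1) (le_csInf ⟨m, h.1⟩ fun k hk => not_lt.1 fun hkm => h.2 k hkm hk)

lemma Fintype.sum_ite_eq_ite_eq {α M : Type*} [Fintype α] [DecidableEq α] [AddCommMonoid M]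
    {p q : α} (hpq : p ≠ q) (A B C : M) :
    ∑ x, (if x = p then A else if x = q then B else C) = A + B + (Fintype.card α - 2) • C := by
  have hq : q ∈ Finset.univ.erase p := Finset.mem_erase.2 ⟨hpq.symm, Finset.mem_univ q⟩
  rw [← Finset.add_sum_erase _ _ (Finset.mem_univ p), ← Finset.add_sum_erase _ _ hq,
    Finset.sum_congr rfl (g := fun _ => C), Finset.sum_const, Finset.card_erase_of_mem hq,
    Finset.card_erase_of_mem (Finset.mem_univ p), Finset.card_univ, if_pos rfl, if_neg hpq.symm,
    if_pos rfl, add_assoc, Nat.sub_sub]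
  intro x hx
  simp only [Finset.mem_erase] at hx
  rw [if_neg hx.2.1, if_neg hx.1]

lemma sum_subtype_sk2Vert {n : ℕ} {M : Type*} [AddCommMonoid M] (f : (Fin 2 → Fin n) → M) :
    ∑ v : {v : Fin 2 → Fin n // sk2Vert v}, f v =
      ∑ x, ∑ y, if x ≠ y then f ![x, y] else 0 := by
  classical
  rw [← Finset.sum_subtype (Finset.univ.filter sk2Vert) (by simp) f, Finset.sum_filter,
    ← (finTwoArrowEquiv _).symm.sum_comp, Fintype.sum_prod_type]
  rfl

section
variable {d : ℕ} {u : Fin 2 → Fin (d + 1)}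

lemma sum_sk2Dist_row (hu : sk2Vert u) (x : Fin (d + 1)) :
    ∑ y, (if x ≠ y then sk2Dist u ![x, y] else 0) =
      if x = u 1 then d + 3 else if x = u 0 then 3 * (d - 1) else 2 * d + 1 := by
  have hab : u 0 ≠ u 1 := hu
  by_cases hxb : x = u 1
  · calc ∑ y, (if x ≠ y then sk2Dist u ![x, y] else 0)
          = ∑ y, if y = u 1 then 0 else if y = u 0 then 4 else 1 :=
          Finset.sum_congr rfl fun y _ => by simp only [sk2Dist]; split_ifs <;> simp_all
      _ = _ := by
        rw [Fintype.sum_ite_eq_ite_eq hab.symm]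
        simp only [Fintype.card_fin, Nat.reduceSubDiff, smul_eq_mul, hxb, ↓reduceIte]
        omega
  by_cases hxa : x = u 0
  · calc ∑ y, (if x ≠ y then sk2Dist u ![x, y] else 0)
          = ∑ y, if y = u 0 then 0 else if y = u 1 then 0 else 3 :=
          Finset.sum_congr rfl fun y _ => by simp only [sk2Dist]; split_ifs <;> simp_all
      _ = _ := by rw [Fintype.sum_ite_eq_ite_eq hab]; simp [hxa, hab, mul_comm]
  · calc ∑ y, (if x ≠ y then sk2Dist u ![x, y] else 0)
          = ∑ y, if y = x then 0 else if y = u 1 then 3 else 2 :=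
          Finset.sum_congr rfl fun y _ => by simp only [sk2Dist]; split_ifs <;> simp_all
      _ = _ := by
        rw [Fintype.sum_ite_eq_ite_eq hxb]
        simp only [Fintype.card_fin, Nat.reduceSubDiff, smul_eq_mul, hxb, hxa, ↓reduceIte]
        omega

lemma sum_sk2Dist (hd : 1 ≤ d) (hu : sk2Vert u) :
    ∑ x, ∑ y, (if x ≠ y then sk2Dist u ![x, y] else 0) + 1 = 2 * d ^ 2 + 3 * d := by
  simp only [sum_sk2Dist_row hu]
  rw [Fintype.sum_ite_eq_ite_eq (Ne.symm hu)]
  obtain ⟨e, rfl⟩ := Nat.exists_eq_add_of_le' hd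
  simp only [add_tsub_cancel_right, Fintype.card_fin, Nat.reduceSubDiff, smul_eq_mul]
  ring

lemma sum_sInf_sk2Walk (hd : 3 ≤ d) (hu : sk2Vert u) :
    ∑ v : {v : Fin 2 → Fin (d + 1) // sk2Vert v}, sInf {k | sk2Walk k u v.val} + 1 =
      2 * d ^ 2 + 3 * d := by
  rw [Finset.sum_congr rfl fun v _ => (sk2DistEq_sk2Dist hd hu v.2).sInf_eq,
    sum_subtype_sk2Vert (sk2Dist u), sum_sk2Dist (by omega) hu]

end

/-- The mean distance of the subKautz digraph `sK(d,2)` with `d ≥ 3` is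
`(2d² + 3d − 1)/(d² + d)`: for any fixed vertex `u` (by vertex-transitivity), the
average over all vertices `v` of the distance `dist(u,v)` (the least length of a walk
from `u` to `v`) equals this value. -/
theorem stmt18 (d : ℕ) (hd : 3 ≤ d)
    (u : Fin 2 → Fin (d + 1)) (hu : sk2Vert u) :
    ((∑ v : {v : Fin 2 → Fin (d + 1) // sk2Vert v},
        (sInf {k : ℕ | sk2Walk k u v.val} : ℕ) : ℕ) : ℚ) / ((d : ℚ) ^ 2 + d) =
      (2 * (d : ℚ) ^ 2 + 3 * d - 1) / ((d : ℚ) ^ 2 + d) := by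
  have hsum : ((∑ v : {v : Fin 2 → Fin (d + 1) // sk2Vert v},
      sInf {k | sk2Walk k u v.val} : ℕ) : ℚ) + 1 = 2 * d ^ 2 + 3 * d := by
    exact_mod_cast sum_sInf_sk2Walk hd hu
  rw [← hsum, add_sub_cancel_right]
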